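/- Fix k > 0 and ρ ∈ (-1, 1). If β* is any global minimizer over ℝ of L(β) = (kβ² + β - 1)² + 2(1-ρ)β²(1-β)k, and β^fp > 0 satisfies k²(β^fp)³ + 2kρ(β^fp)² + (1 - kρ)β^fp - 1 = 0, then β* < β^fp. -/

import Mathlib

/-!
Write `L` for the loss and `C` for the fixed-point cubic. A direct computation gives
`L'(a) = 2 k a (k a² + ρ a - ρ) + 2 C(a)` and the exact expansion
`L(a + t) - L(a) = t L'(a) + t² ((k t + 2 k a + ρ)² + 2 k (k a² + ρ a - ρ) + 1 - ρ²)`.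
At a positive root `a` of `C` the factor `k a² + ρ a - ρ` is positive, so `L'(a) > 0` and `L` does not
decrease to the right of `a`. If a global minimiser lay at or to the right of `a`, then `a` would be a
global minimiser too, contradicting `L'(a) ≠ 0`.
-/

namespace PolicySensitivity

def loss (k ρ β : ℝ) : ℝ := (k*β^2 + β - 1)^2 + 2*(1-ρ)*β^2*(1-β)*k

def fixedPointCubic (k ρ β : ℝ) : ℝ := k^2 * β^3 + 2*k*ρ*β^2 + (1 - k*ρ)*β - 1

theorem hasDerivAt_loss (k ρ a : ℝ) :
    HasDerivAt (loss k ρ) (2*k*a*(k*a^2 + ρ*a - ρ) + 2 * fixedPointCubic k ρ a) a := by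
  have hid := hasDerivAt_id' a
  have h := ((((hid.fun_pow 2).const_mul k).fun_add hid).sub_const 1).fun_pow 2 |>.fun_add
    ((((hid.fun_pow 2).const_mul (2*(1-ρ))).fun_mul (hid.const_sub 1)).mul_const k)
  exact h.congr_deriv (by simp only [fixedPointCubic, Nat.cast_ofNat]; ring)

theorem loss_add_sub_loss (k ρ a t : ℝ) :
    loss k ρ (a + t) - loss k ρ a =
      t * (2*k*a*(k*a^2 + ρ*a - ρ) + 2 * fixedPointCubic k ρ a)
        + t^2 * ((k*t + 2*k*a + ρ)^2 + 2*k*(k*a^2 + ρ*a - ρ) + 1 - ρ^2) := by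
  simp only [loss, fixedPointCubic]; ring

section FixedPoint

variable {k ρ a : ℝ}

theorem quadratic_pos_of_fixedPoint (hk : 0 < k) (hρ : -1 < ρ) (ha : 0 < a)
    (hC : fixedPointCubic k ρ a = 0) : 0 < k*a^2 - a + 1 := by
  rcases le_or_gt a 1 with ha1 | ha1
  · nlinarith [mul_pos hk (pow_pos ha 2)]
  -- If `k a² - a + 1 ≤ 0` then `k a² < a`, so `k a < 1` and the left side below is `≥ 0`.
  have hfac : (k*a - 1) * (k*a^2 - a + 1) = -(k*(1+ρ)*a*(2*a - 1)) := by
    unfold fixedPointCubic at hC; linear_combination hC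
  have hneg : 0 < k*(1+ρ)*a*(2*a - 1) := by
    have : 0 < 1 + ρ := by linarith
    have : 0 < 2*a - 1 := by linarith
    positivity
  by_contra! hQ
  nlinarith [mul_pos hk ha]

theorem slope_factor_pos_of_fixedPoint (hk : 0 < k) (hρ : ρ ∈ Set.Ioo (-1 : ℝ) 1) (ha : 0 < a)
    (hC : fixedPointCubic k ρ a = 0) : 0 < k*a^2 + ρ*a - ρ := by
  have hQ := quadratic_pos_of_fixedPoint hk hρ.1 ha hC
  have hfac : (k*a + 1) * (k*a^2 + ρ*a - ρ) = (1 - ρ) * (k*a^2 - a + 1) := by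
    unfold fixedPointCubic at hC; linear_combination hC
  have hrhs : 0 < (1 - ρ) * (k*a^2 - a + 1) := mul_pos (by linarith [hρ.2]) hQ
  have hka : 0 < k*a + 1 := by positivity
  exact pos_of_mul_pos_right (hfac ▸ hrhs) hka.le

theorem loss_le_loss_of_fixedPoint_le (hk : 0 < k) (hρ : ρ ∈ Set.Ioo (-1 : ℝ) 1) (ha : 0 < a)
    (hC : fixedPointCubic k ρ a = 0) {b : ℝ} (hab : a ≤ b) : loss k ρ a ≤ loss k ρ b := by
  have hP := slope_factor_pos_of_fixedPoint hk hρ ha hC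
  have hρ2 : 0 < 1 - ρ^2 := by nlinarith [hρ.1, hρ.2]
  have hexp := loss_add_sub_loss k ρ a (b - a)
  rw [add_sub_cancel, hC] at hexp
  have ht : 0 ≤ b - a := sub_nonneg.2 hab
  have : 0 ≤ loss k ρ b - loss k ρ a := by
    rw [hexp]
    have hR : 0 ≤ (k*(b - a) + 2*k*a + ρ)^2 + 2*k*(k*a^2 + ρ*a - ρ) + 1 - ρ^2 := by
      have : 0 < 2*k*(k*a^2 + ρ*a - ρ) := by positivity
      nlinarith [sq_nonneg (k*(b - a) + 2*k*a + ρ)]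
    exact add_nonneg (mul_nonneg ht (by positivity)) (mul_nonneg (sq_nonneg _) hR)
  linarith

end FixedPoint

end PolicySensitivity

open PolicySensitivity in
/-- Main result: any global minimizer β* of L is strictly smaller than any
positive fixed point β^fp. -/
theorem stmt_6 (k ρ : ℝ) (hk : 0 < k) (hρ : ρ ∈ Set.Ioo (-1 : ℝ) 1)
    (βs βfp : ℝ)
    (hmin : ∀ b : ℝ, (k*βs^2 + βs - 1)^2 + 2*(1-ρ)*βs^2*(1-βs)*k ≤
      (k*b^2 + b - 1)^2 + 2*(1-ρ)*b^2*(1-b)*k)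
    (hfp_pos : 0 < βfp)
    (hfp : k^2 * βfp^3 + 2*k*ρ*βfp^2 + (1 - k*ρ)*βfp - 1 = 0) :
    βs < βfp := by
  have hC : fixedPointCubic k ρ βfp = 0 := hfp
  by_contra! hle
  have hfp_min : IsLocalMin (loss k ρ) βfp := IsMinOn.isLocalMin
    (fun b _ => (loss_le_loss_of_fixedPoint_le hk hρ hfp_pos hC hle).trans (hmin b))
    Filter.univ_mem
  have hderiv := hfp_min.hasDerivAt_eq_zero (hasDerivAt_loss k ρ βfp)
  rw [hC] at hderiv
  have hP := slope_factor_pos_of_fixedPoint hk hρ hfp_pos hC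
  have : 0 < 2*k*βfp*(k*βfp^2 + ρ*βfp - ρ) := by positivity
  linarith
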